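/- Let ν > 0. For f holomorphic on the upper half-plane, if f ∈ A¹_ν(ℂ₊), i.e. ∫_{ℂ₊}|f(x+iy)| y^{ν−1} dx dy < ∞, then f ∈ H¹_ν, i.e. sup_{y>0} y^ν ∫_ℝ |f(x+iy)| dx < ∞, and ‖f‖_{H¹_ν} ≤ C‖f‖_{A¹_ν} for a constant C depending only on ν. -/

import Mathlib

/-!
Since `|f|` is subharmonic, `|f(x + iy)|` is at most the average of `|f|` over the disc of
radius `y/2` around `x + iy`. Integrating in `x` (Tonelli), every point of the horizontal strip
`|Im w - y| < y/2` is counted with multiplicity at most `y`, so `y ∫ |f(x + iy)| dx` is bounded by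
a multiple of `∫_strip |f|`; on that strip `Im w` is comparable to `y`, so the weight `y^(ν-1)` is
comparable to `(Im w)^(ν-1)`.
-/

open MeasureTheory Complex Metric Set
open scoped ENNReal Real

-- The angle runs over `Ioo (-π) π`, the angular range of `polarCoord.target`.
lemma ofReal_two_pi_mul_enorm_le_lintegral_circleMap {f : ℂ → ℂ} {c : ℂ} {ρ : ℝ} (hρ : 0 ≤ ρ)
    (hf : DifferentiableOn ℂ f (closedBall c ρ)) :
    ENNReal.ofReal (2 * π) * ‖f c‖ₑ ≤ ∫⁻ θ in Ioo (-π) π, ‖f (circleMap c ρ θ)‖ₑ := by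
  have hmean : (2 * π : ℝ) • f c = ∫ θ in Ioo (-π) π, f (circleMap c ρ θ) := by
    have hcirc := (hf.diffContOnCl_ball (by rw [abs_of_nonneg hρ])).circleAverage
    have hshift := ((periodic_circleMap c ρ).comp f).intervalIntegral_add_eq 0 (-π)
    rw [zero_add, show -π + 2 * π = π by ring] at hshift
    rw [← hcirc, Real.circleAverage_def, smul_inv_smul₀ (by positivity),
      ← integral_Ioc_eq_integral_Ioo, ← intervalIntegral.integral_of_le (by linarith [Real.pi_pos])]
    exact hshift
  calc ENNReal.ofReal (2 * π) * ‖f c‖ₑ = ‖(2 * π : ℝ) • f c‖ₑ := by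
        rw [enorm_smul, Real.enorm_of_nonneg (by positivity)]
    _ ≤ _ := hmean ▸ enorm_integral_le_lintegral_enorm _

lemma circleMap_eq_add_polarCoord_symm (c : ℂ) (p : ℝ × ℝ) :
    circleMap c p.1 p.2 = c + Complex.polarCoord.symm p := by
  simp only [circleMap, Complex.polarCoord_symm_apply, exp_mul_I]
  push_cast
  ring

lemma setLIntegral_ball_eq_setLIntegral_circleMap (g : ℂ → ℝ≥0∞) (c : ℂ) (r : ℝ) :
    ∫⁻ w in ball c r, g w =
      ∫⁻ p in Ioo 0 r ×ˢ Ioo (-π) π, ENNReal.ofReal p.1 * g (circleMap c p.1 p.2) := by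
  have hball : ∀ p ∈ polarCoord.target, ENNReal.ofReal p.1 • (ball 0 r).indicator
      (fun w => g (c + w)) (Complex.polarCoord.symm p) =
      (Iio r ×ˢ univ).indicator (fun p => ENNReal.ofReal p.1 * g (circleMap c p.1 p.2)) p := by
    rintro p ⟨hp : 0 < p.1, -⟩
    simp only [indicator, mem_ball_zero_iff, Complex.norm_polarCoord_symm, abs_of_pos hp,
      mem_prod, mem_Iio, mem_univ, and_true, circleMap_eq_add_polarCoord_symm, smul_eq_mul]
    split_ifs <;> simp
  calc ∫⁻ w in ball c r, g w = ∫⁻ w, (ball c r).indicator g (c + w) := by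
        rw [← lintegral_indicator measurableSet_ball, lintegral_add_left_eq_self]
    _ = ∫⁻ w, (ball 0 r).indicator (fun w => g (c + w)) w := by
        congr with w
        simp [indicator, dist_eq_norm]
    _ = _ := by
        rw [← Complex.lintegral_comp_polarCoord_symm, setLIntegral_congr_fun
          polarCoord.open_target.measurableSet hball, lintegral_indicator
          (measurableSet_Iio.prod .univ), Measure.restrict_restrict (measurableSet_Iio.prod .univ),
          polarCoord_target, prod_inter_prod, Iio_inter_Ioi, univ_inter]

lemma setLIntegral_ofReal_Ioo_zero {r : ℝ} (hr : 0 ≤ r) :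
    ∫⁻ ρ in Ioo 0 r, ENNReal.ofReal ρ = ENNReal.ofReal (r ^ 2 / 2) := by
  have hint : IntegrableOn (fun ρ : ℝ => ρ) (Ioo 0 r) :=
    continuous_id'.integrableOn_Icc.mono_set Ioo_subset_Icc_self
  have hnonneg : ∀ᵐ ρ ∂volume.restrict (Ioo (0 : ℝ) r), 0 ≤ ρ :=
    (ae_restrict_mem measurableSet_Ioo).mono fun ρ hρ => hρ.1.le
  rw [← ofReal_integral_eq_lintegral_ofReal hint hnonneg, ← integral_Ioc_eq_integral_Ioo,
    ← intervalIntegral.integral_of_le hr, integral_id]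
  simp

lemma ofReal_mul_enorm_le_setLIntegral_ball {f : ℂ → ℂ} {c : ℂ} {r : ℝ} (hr : 0 ≤ r)
    (hf : DifferentiableOn ℂ f (closedBall c r)) :
    ENNReal.ofReal (π * r ^ 2) * ‖f c‖ₑ ≤ ∫⁻ w in ball c r, ‖f w‖ₑ := by
  have hmaps : MapsTo (fun p : ℝ × ℝ => circleMap c p.1 p.2) (Ioo 0 r ×ˢ Ioo (-π) π)
      (closedBall c r) := by
    rintro p ⟨⟨hp0, hpr⟩, -⟩
    simp [dist_eq_norm, abs_of_pos hp0, hpr.le]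
  have hcont : ContinuousOn (fun p : ℝ × ℝ => f (circleMap c p.1 p.2)) (Ioo 0 r ×ˢ Ioo (-π) π) :=
    hf.continuousOn.comp (by simp only [circleMap]; fun_prop) hmaps
  rw [setLIntegral_ball_eq_setLIntegral_circleMap, Measure.volume_eq_prod,
    setLIntegral_prod (fun p : ℝ × ℝ => ENNReal.ofReal p.1 * ‖f (circleMap c p.1 p.2)‖ₑ)
      (measurable_fst.ennreal_ofReal.aemeasurable.mul
      (hcont.aemeasurable (measurableSet_Ioo.prod measurableSet_Ioo)).enorm)]
  calc ENNReal.ofReal (π * r ^ 2) * ‖f c‖ₑ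
      = ∫⁻ ρ in Ioo 0 r, ENNReal.ofReal ρ * (ENNReal.ofReal (2 * π) * ‖f c‖ₑ) := by
        rw [lintegral_mul_const _ measurable_id'.ennreal_ofReal, setLIntegral_ofReal_Ioo_zero hr,
          ← mul_assoc, ← ENNReal.ofReal_mul (by positivity)]
        ring_nf
    _ ≤ ∫⁻ ρ in Ioo 0 r, ENNReal.ofReal ρ * ∫⁻ θ in Ioo (-π) π, ‖f (circleMap c ρ θ)‖ₑ :=
        setLIntegral_mono' measurableSet_Ioo fun ρ hρ => mul_le_mul_right
          (ofReal_two_pi_mul_enorm_le_lintegral_circleMap hρ.1.le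
            (hf.mono (closedBall_subset_closedBall hρ.2.le))) _
    _ = _ := by simp_rw [lintegral_const_mul' _ _ ENNReal.ofReal_ne_top]

lemma lintegral_setLIntegral_ball_le_strip {g : ℂ → ℝ≥0∞} {y r : ℝ}
    (hg : AEMeasurable g (volume.restrict {w : ℂ | |w.im - y| < r})) :
    ∫⁻ x : ℝ, ∫⁻ w in ball (x + y * I) r, g w ≤
      ENNReal.ofReal (2 * r) * ∫⁻ w in {w : ℂ | |w.im - y| < r}, g w := by
  set S := {w : ℂ | |w.im - y| < r}
  have hS : MeasurableSet S := measurableSet_lt (by fun_prop) measurable_const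
  have hball : ∀ (x : ℝ) (w : ℂ), (ball (x + y * I) r).indicator g w ≤
      (ball w.re r).indicator 1 x * S.indicator g w := by
    intro x w
    by_cases hw : w ∈ ball (x + y * I) r
    · have hre : dist x w.re < r := by
        rw [Real.dist_eq, abs_sub_comm]
        simpa using (abs_re_le_norm _).trans_lt (mem_ball_iff_norm.1 hw)
      have him : w ∈ S := by
        simpa [S] using (abs_im_le_norm _).trans_lt (mem_ball_iff_norm.1 hw)
      simp [indicator_of_mem hw, indicator_of_mem him, hre]
    · simp [indicator_of_notMem hw]
  have hmeas : AEMeasurable (Function.uncurry fun (x : ℝ) (w : ℂ) =>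
      (ball w.re r).indicator 1 x * S.indicator g w) (volume.prod volume) := by
    have hstrip : Measurable fun p : ℝ × ℂ => (ball p.2.re r).indicator (1 : ℝ → ℝ≥0∞) p.1 := by
      have : (fun p : ℝ × ℂ => (ball p.2.re r).indicator (1 : ℝ → ℝ≥0∞) p.1) =
          {p : ℝ × ℂ | dist p.1 p.2.re < r}.indicator 1 := by
        ext p; simp [indicator]
      rw [this]
      exact measurable_one.indicator (measurableSet_lt (by fun_prop) measurable_const)
    exact hstrip.aemeasurable.mul (((aemeasurable_indicator_iff hS).2 hg)
      |>.comp_quasiMeasurePreserving Measure.quasiMeasurePreserving_snd)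
  calc ∫⁻ x : ℝ, ∫⁻ w in ball (x + y * I) r, g w
      = ∫⁻ x : ℝ, ∫⁻ w, (ball (x + y * I) r).indicator g w := by
        simp_rw [lintegral_indicator measurableSet_ball]
    _ ≤ ∫⁻ x : ℝ, ∫⁻ w, (ball w.re r).indicator 1 x * S.indicator g w :=
        lintegral_mono fun x => lintegral_mono fun w => hball x w
    _ = ∫⁻ w, ∫⁻ x : ℝ, (ball w.re r).indicator 1 x * S.indicator g w :=
        lintegral_lintegral_swap hmeas
    _ = ∫⁻ w, ENNReal.ofReal (2 * r) * S.indicator g w := by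
        congr with w
        rw [lintegral_mul_const _ (measurable_one.indicator measurableSet_ball),
          lintegral_indicator_one measurableSet_ball, Real.volume_ball]
    _ = ENNReal.ofReal (2 * r) * ∫⁻ w in S, g w := by
        rw [lintegral_const_mul' _ _ ENNReal.ofReal_ne_top, lintegral_indicator hS]

lemma ofReal_mul_lintegral_horizontal_le_setLIntegral_strip {f : ℂ → ℂ} {y r : ℝ} (hr : 0 < r)
    (hf : DifferentiableOn ℂ f {w : ℂ | |w.im - y| ≤ r}) :
    ENNReal.ofReal (π * r / 2) * ∫⁻ x : ℝ, ‖f (x + y * I)‖ₑ ≤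
      ∫⁻ w in {w : ℂ | |w.im - y| < r}, ‖f w‖ₑ := by
  have hdisc (x : ℝ) : ENNReal.ofReal (π * r ^ 2) * ‖f (x + y * I)‖ₑ ≤
      ∫⁻ w in ball (x + y * I) r, ‖f w‖ₑ := by
    refine ofReal_mul_enorm_le_setLIntegral_ball hr.le (hf.mono fun w hw => ?_)
    simpa using (abs_im_le_norm _).trans (mem_closedBall_iff_norm.1 hw)
  have hmeas : AEMeasurable (fun w => ‖f w‖ₑ) (volume.restrict {w : ℂ | |w.im - y| < r}) :=
    ((hf.continuousOn.mono fun w (hw : |w.im - y| < r) => hw.le).aemeasurable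
      (measurableSet_lt (by fun_prop : Measurable fun w : ℂ => |w.im - y|) measurable_const)).enorm
  refine (ENNReal.mul_le_mul_iff_right (a := ENNReal.ofReal (2 * r)) ?_ ENNReal.ofReal_ne_top).1 ?_
  · simpa using hr
  calc ENNReal.ofReal (2 * r) * (ENNReal.ofReal (π * r / 2) * ∫⁻ x : ℝ, ‖f (x + y * I)‖ₑ)
      = ∫⁻ x : ℝ, ENNReal.ofReal (π * r ^ 2) * ‖f (x + y * I)‖ₑ := by
        rw [lintegral_const_mul' _ _ ENNReal.ofReal_ne_top, ← mul_assoc,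
          ← ENNReal.ofReal_mul (by positivity)]
        congr 2
        ring
    _ ≤ ∫⁻ x : ℝ, ∫⁻ w in ball (x + y * I) r, ‖f w‖ₑ := lintegral_mono hdisc
    _ ≤ _ := lintegral_setLIntegral_ball_le_strip hmeas

lemma rpow_le_two_rpow_abs {a p : ℝ} (ha : 0 < a) (h₁ : a ≤ 2) (h₂ : a⁻¹ ≤ 2) :
    a ^ p ≤ 2 ^ |p| := by
  rcases le_total 0 p with hp | hp
  · rw [abs_of_nonneg hp]
    exact Real.rpow_le_rpow ha.le h₁ hp
  · calc a ^ p = a⁻¹ ^ (-p) := by rw [Real.inv_rpow ha.le, ← Real.rpow_neg ha.le, neg_neg]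
      _ ≤ 2 ^ |p| := by
        rw [abs_of_nonpos hp]
        exact Real.rpow_le_rpow (inv_nonneg.2 ha.le) h₂ (neg_nonneg.2 hp)

lemma ofReal_rpow_mul_setLIntegral_strip_le (g : ℂ → ℝ≥0∞) {y : ℝ} (p : ℝ) (hy : 0 < y) :
    ENNReal.ofReal (y ^ p) * ∫⁻ w in {w : ℂ | |w.im - y| < y / 2}, g w ≤
      ENNReal.ofReal (2 ^ |p|) * ∫⁻ w in {w : ℂ | 0 < w.im}, g w * ENNReal.ofReal (w.im ^ p) := by
  set S := {w : ℂ | |w.im - y| < y / 2}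
  have hS : MeasurableSet S := measurableSet_lt (by fun_prop) measurable_const
  have hSpos : ∀ w ∈ S, y / 2 < w.im ∧ w.im < 3 * y / 2 := fun w (hw : |w.im - y| < y / 2) => by
    obtain ⟨hlo, hhi⟩ := abs_lt.1 hw
    constructor <;> linarith
  have hweight : ∀ w ∈ S, y ^ p ≤ 2 ^ |p| * w.im ^ p := by
    intro w hw
    obtain ⟨hlo, hhi⟩ := hSpos w hw
    have him : 0 < w.im := by linarith
    have hratio : (y / w.im) ^ p ≤ 2 ^ |p| := rpow_le_two_rpow_abs (by positivity)
      ((div_le_iff₀ him).2 (by linarith)) (by rw [inv_div, div_le_iff₀ hy]; linarith)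
    calc y ^ p = (y / w.im) ^ p * w.im ^ p := by
          rw [Real.div_rpow hy.le him.le, div_mul_cancel₀ _ (by positivity)]
      _ ≤ 2 ^ |p| * w.im ^ p := by gcongr
  rw [← lintegral_const_mul' _ _ ENNReal.ofReal_ne_top,
    ← lintegral_const_mul' _ _ ENNReal.ofReal_ne_top]
  calc ∫⁻ w in S, ENNReal.ofReal (y ^ p) * g w
      ≤ ∫⁻ w in S, ENNReal.ofReal (2 ^ |p|) * (g w * ENNReal.ofReal (w.im ^ p)) := by
        refine setLIntegral_mono' hS fun w hw => ?_
        rw [mul_comm (g w), ← mul_assoc, ← ENNReal.ofReal_mul (by positivity)]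
        gcongr
        exact hweight w hw
    _ ≤ _ := lintegral_mono_set fun w hw =>
        show 0 < w.im by linarith [(hSpos w hw).1]

lemma ofReal_mul_lintegral_horizontal_le_weighted {f : ℂ → ℂ} {y : ℝ} (ν : ℝ)
    (hf : DifferentiableOn ℂ f {z : ℂ | 0 < z.im}) (hy : 0 < y) :
    ENNReal.ofReal (π / 4 * y ^ ν) * ∫⁻ x : ℝ, ‖f (x + y * I)‖ₑ ≤
      ENNReal.ofReal (2 ^ |ν - 1|) *
        ∫⁻ w in {z : ℂ | 0 < z.im}, ‖f w‖ₑ * ENNReal.ofReal (w.im ^ (ν - 1)) := by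
  have hstrip : DifferentiableOn ℂ f {w : ℂ | |w.im - y| ≤ y / 2} :=
    hf.mono fun w (hw : |w.im - y| ≤ y / 2) => show 0 < w.im by linarith [(abs_le.1 hw).1]
  calc ENNReal.ofReal (π / 4 * y ^ ν) * ∫⁻ x : ℝ, ‖f (x + y * I)‖ₑ
      = ENNReal.ofReal (y ^ (ν - 1)) *
          (ENNReal.ofReal (π * (y / 2) / 2) * ∫⁻ x : ℝ, ‖f (x + y * I)‖ₑ) := by
        rw [← mul_assoc, ← ENNReal.ofReal_mul (by positivity), Real.rpow_sub_one hy.ne']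
        congr 2
        field_simp
        norm_num
    _ ≤ ENNReal.ofReal (y ^ (ν - 1)) * ∫⁻ w in {w : ℂ | |w.im - y| < y / 2}, ‖f w‖ₑ :=
        mul_le_mul_right (ofReal_mul_lintegral_horizontal_le_setLIntegral_strip (half_pos hy)
          hstrip) _
    _ ≤ _ := ofReal_rpow_mul_setLIntegral_strip_le _ _ hy

theorem bergman_embeds_in_hardy_general (ν : ℝ) :
    ∃ C : ℝ, 0 < C ∧ ∀ f : ℂ → ℂ,
      DifferentiableOn ℂ f {z : ℂ | 0 < z.im} →
      IntegrableOn (fun w : ℂ => ‖f w‖ * w.im ^ (ν - 1)) {z : ℂ | 0 < z.im} →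
      ∀ y : ℝ, 0 < y →
        y ^ ν * (∫ x : ℝ, ‖f (x + y * I)‖) ≤
          C * ∫ w in {z : ℂ | 0 < z.im}, ‖f w‖ * w.im ^ (ν - 1) := by
  refine ⟨4 * 2 ^ |ν - 1| / π, by positivity, fun f hf hint y hy => ?_⟩
  have hline : Continuous fun x : ℝ => f (x + y * I) :=
    hf.continuousOn.comp_continuous (by fun_prop) fun x => by simpa using hy
  have hnonneg : 0 ≤ᵐ[volume.restrict {z : ℂ | 0 < z.im}] fun w => ‖f w‖ * w.im ^ (ν - 1) :=
    (ae_restrict_mem (measurableSet_lt measurable_const Complex.measurable_im)).mono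
      fun w (hw : 0 < w.im) => by positivity
  have hbergman : ∫⁻ w in {z : ℂ | 0 < z.im}, ‖f w‖ₑ * ENNReal.ofReal (w.im ^ (ν - 1)) =
      ENNReal.ofReal (∫ w in {z : ℂ | 0 < z.im}, ‖f w‖ * w.im ^ (ν - 1)) := by
    simp_rw [ofReal_integral_eq_lintegral_ofReal hint hnonneg, ENNReal.ofReal_mul (norm_nonneg _),
      ofReal_norm]
  have hbound := ofReal_mul_lintegral_horizontal_le_weighted ν hf hy
  rw [hbergman, ← ENNReal.ofReal_mul (by positivity)] at hbound
  have hreal := ENNReal.toReal_mono ENNReal.ofReal_ne_top hbound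
  rw [ENNReal.toReal_mul, ENNReal.toReal_ofReal (by positivity), ENNReal.toReal_ofReal
    (mul_nonneg (by positivity) (integral_nonneg_of_ae hnonneg)),
    ← integral_norm_eq_lintegral_enorm hline.aestronglyMeasurable] at hreal
  calc y ^ ν * ∫ x : ℝ, ‖f (x + y * I)‖
      = 4 / π * (π / 4 * y ^ ν * ∫ x : ℝ, ‖f (x + y * I)‖) := by field_simp
    _ ≤ 4 / π * (2 ^ |ν - 1| * ∫ w in {z : ℂ | 0 < z.im}, ‖f w‖ * w.im ^ (ν - 1)) := by gcongr
    _ = _ := by ring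

/-- Embedding `A¹_ν(ℂ₊) ⊂ H¹_ν(ℂ₊)`: for holomorphic `f` with finite weighted
Bergman norm, `y^ν ∫_ℝ |f(x+iy)| dx ≤ C ‖f‖_{A¹_ν}` for all `y > 0`. -/
theorem bergman_embeds_in_hardy (ν : ℝ) (hν : 0 < ν) :
    ∃ C : ℝ, 0 < C ∧ ∀ f : ℂ → ℂ,
      DifferentiableOn ℂ f {z : ℂ | 0 < z.im} →
      IntegrableOn (fun w : ℂ => ‖f w‖ * w.im ^ (ν - 1)) {z : ℂ | 0 < z.im} →
      ∀ y : ℝ, 0 < y →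
        y ^ ν * (∫ x : ℝ, ‖f (x + y * I)‖) ≤
          C * ∫ w in {z : ℂ | 0 < z.im}, ‖f w‖ * w.im ^ (ν - 1) :=
  bergman_embeds_in_hardy_general ν
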